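/- Suppose there exists α > 0 such that x·f(k,x) ≤ 0 for all k ∈ Z[1,N] and all |x| > α, and suppose min_{k} p(k) > 0. Then the functional J is coercive on E (J(x) → +∞ as ‖x‖ → ∞), and consequently the boundary value problem Δⁿ(p(k-n)Δⁿx(k-n)) + (-1)^{n+1} f(k,x(k)) = 0 with Dirichlet conditions has at least one solution. -/

import Mathlib

open Finset

/-- forward difference operator -/
def dd (x : ℤ → ℝ) : ℤ → ℝ := fun i => x (i + 1) - x i

/-- extension of `v : Fin N → ℝ` to a function on `ℤ` supported on `Z[1,N]`
(thus vanishing on `Z[1-n,0] ∪ Z[N+1,N+n]`); this realizes the space `E`. -/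
noncomputable def extendE (N : ℕ) (v : Fin N → ℝ) : ℤ → ℝ := fun i =>
  if h : 0 ≤ i - 1 ∧ (i - 1).toNat < N then v ⟨(i - 1).toNat, h.2⟩ else 0

/-- the norm of the space `E`: `‖x‖ = (∑_{k=1}^N x(k)²)^{1/2}` -/
noncomputable def normE (N : ℕ) (v : Fin N → ℝ) : ℝ :=
  Real.sqrt (∑ k ∈ Finset.Icc (1 : ℤ) (N : ℤ), (extendE N v k) ^ 2)

/-- `F(k,s) = ∫₀ˢ f(k,t) dt` -/
noncomputable def Ffun (f : ℤ → ℝ → ℝ) (k : ℤ) (s : ℝ) : ℝ := ∫ t in (0 : ℝ)..s, f k t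

/-- the action functional `J` -/
noncomputable def Jfun (n N : ℕ) (p : ℤ → ℝ) (F : ℤ → ℝ → ℝ) (v : Fin N → ℝ) : ℝ :=
  ∑ k ∈ Finset.Icc (1 - (n : ℤ)) (N : ℤ),
    ((1 / 2 : ℝ) * p k * (dd^[n] (extendE N v) k) ^ 2 - F k (extendE N v k))

/-- `v` solves the discrete BVP
`Δⁿ(p(k-n)Δⁿx(k-n)) + (-1)^{n+1} f(k,x(k)) = 0`, `k ∈ Z[1,N]`,
with the Dirichlet boundary conditions built into `extendE`. -/
def Solves (n N : ℕ) (p : ℤ → ℝ) (f : ℤ → ℝ → ℝ) (v : Fin N → ℝ) : Prop :=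
  ∀ k ∈ Finset.Icc (1 : ℤ) (N : ℤ),
    dd^[n] (fun j => p j * dd^[n] (extendE N v) j) (k - n)
      + (-1 : ℝ) ^ (n + 1) * f k (extendE N v k) = 0

/-- coercivity: `J(x) → +∞` as `‖x‖ → ∞` -/
def CoerciveE (N : ℕ) (J : (Fin N → ℝ) → ℝ) : Prop :=
  ∀ C : ℝ, ∃ R : ℝ, ∀ v : Fin N → ℝ, R ≤ normE N v → C ≤ J v

/-- anti-coercivity: `J(x) → −∞` as `‖x‖ → ∞` -/
def AntiCoerciveE (N : ℕ) (J : (Fin N → ℝ) → ℝ) : Prop :=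
  ∀ C : ℝ, ∃ R : ℝ, ∀ v : Fin N → ℝ, R ≤ normE N v → J v ≤ C

/-!
The quadratic part of `J` dominates `(min p) λ ‖x‖² / 2`. The constant `λ > 0` exists because
`x ↦ (Δⁿx(k))_{k ∈ Z[1-n,N]}` is injective on `E` (`Δⁿx(k-n)` is `x(k)` plus a combination of
`x(k-1), …, x(k-n)`, and `x` vanishes below `1`), and an injective linear map on a
finite-dimensional space is antilipschitz. The sign condition makes `F(k,·)` increase on
`(-∞, -α]` and decrease on `[α, ∞)`, so `F(k,·)` is bounded above and `J` is coercive. A coercive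
continuous function on `ℝᴺ` has a global minimiser `x`, and differentiating `J` at `x` along the
coordinate directions gives, after summation by parts
(`∑ₖ g(k) Δⁿδₘ(k) = (-1)ⁿ Δⁿg(m-n)`), the difference equation at `m`.
-/

open Filter

lemma dd_eq_fwdDiff : dd = fwdDiff 1 := rfl

lemma dd_iter_apply (n : ℕ) (x : ℤ → ℝ) (k : ℤ) :
    dd^[n] x k = ∑ j ∈ range (n + 1), (-1 : ℝ) ^ (n - j) * n.choose j * x (k + j) := by
  simp [dd_eq_fwdDiff, fwdDiff_iter_eq_sum_shift, zsmul_eq_mul]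

lemma dd_iter_apply_sub (n : ℕ) (x : ℤ → ℝ) (k : ℤ) :
    dd^[n] x (k - n) = ∑ j ∈ range (n + 1), (-1 : ℝ) ^ j * n.choose j * x (k - j) := by
  rw [dd_iter_apply, ← sum_range_reflect]
  refine sum_congr rfl fun j hj => ?_
  have hj : j ≤ n := Nat.lt_succ_iff.mp (mem_range.mp hj)
  rw [Nat.add_sub_cancel, Nat.sub_sub_self hj, Nat.choose_symm hj, Nat.cast_sub hj]
  ring_nf

noncomputable def ddIterₗ (n : ℕ) : (ℤ → ℝ) →ₗ[ℝ] ℤ → ℝ where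
  toFun := dd^[n]
  map_add' x y := fwdDiff_iter_add (1 : ℤ) x y n
  map_smul' c x := fwdDiff_iter_const_smul (1 : ℤ) c x n

lemma eq_zero_of_dd_iter_eq_zero {n : ℕ} {x : ℤ → ℝ} {a b : ℤ} (hx : ∀ k < a, x k = 0)
    (h : ∀ k ∈ Icc a b, dd^[n] x (k - n) = 0) : ∀ k ≤ b, x k = 0 := by
  suffices H : ∀ m : ℕ, ∀ k ≤ b, k < a + m → x k = 0 from
    fun k hk => H (k - a + 1).toNat k hk (by omega)
  intro m
  induction m with
  | zero => exact fun k _ hk => hx k (by simpa using hk)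
  | succ m ih =>
    intro k hkb hk
    rcases lt_or_eq_of_le (Int.lt_add_one_iff.mp (by simpa [← add_assoc] using hk)) with hk | rfl
    · exact ih k hkb hk
    have hsum := h (a + m) (mem_Icc.mpr ⟨by omega, hkb⟩)
    rw [dd_iter_apply_sub, sum_range_succ', sum_eq_zero fun j _ => by
      rw [ih _ (by omega) (by omega), mul_zero]] at hsum
    simpa using hsum

lemma sum_mul_dd_iter_single (n : ℕ) (g : ℤ → ℝ) {a b m : ℤ} (ha : a ≤ m - n) (hb : m ≤ b) :
    ∑ k ∈ Icc a b, g k * dd^[n] (Pi.single m 1) k = (-1) ^ n * dd^[n] g (m - n) := by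
  rw [dd_iter_apply_sub, mul_sum]
  simp_rw [dd_iter_apply, mul_sum, Pi.single_apply, ← eq_sub_iff_add_eq]
  rw [sum_comm]
  refine sum_congr rfl fun j hj => ?_
  have hj : j ≤ n := Nat.lt_succ_iff.mp (mem_range.mp hj)
  have hsign : (-1 : ℝ) ^ (n - j) = (-1) ^ n * (-1) ^ j := by
    rw [← Nat.sub_add_cancel hj, pow_add, Nat.add_sub_cancel, mul_assoc, ← pow_add, ← two_mul,
      pow_mul]
    norm_num
  simp only [mul_ite, mul_one, mul_zero, sum_ite_eq',
    if_pos (show m - (j : ℤ) ∈ Icc a b from mem_Icc.mpr ⟨by omega, by omega⟩), hsign]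
  ring

lemma extendE_apply_of_mem {N : ℕ} (v : Fin N → ℝ) {k : ℤ} (hk : k ∈ Icc 1 (N : ℤ)) :
    extendE N v k = v ⟨(k - 1).toNat, by rw [mem_Icc] at hk; omega⟩ :=
  dif_pos (by rw [mem_Icc] at hk; omega)

lemma extendE_eq_zero {N : ℕ} (v : Fin N → ℝ) {k : ℤ} (hk : k ∉ Icc 1 (N : ℤ)) :
    extendE N v k = 0 :=
  dif_neg fun h => hk (mem_Icc.mpr ⟨by omega, by omega⟩)

noncomputable def extendEₗ (N : ℕ) : (Fin N → ℝ) →ₗ[ℝ] ℤ → ℝ where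
  toFun := extendE N
  map_add' v w := by
    ext k
    by_cases hk : k ∈ Icc 1 (N : ℤ)
    · simp [extendE_apply_of_mem _ hk]
    · simp [extendE_eq_zero _ hk]
  map_smul' c v := by
    ext k
    by_cases hk : k ∈ Icc 1 (N : ℤ)
    · simp [extendE_apply_of_mem _ hk]
    · simp [extendE_eq_zero _ hk]

lemma extendE_coe_add_one {N : ℕ} (v : Fin N → ℝ) (i : Fin N) :
    extendE N v ((i : ℤ) + 1) = v i := by
  rw [extendE_apply_of_mem _ (mem_Icc.mpr ⟨by omega, by omega⟩)]
  congr
  simp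

lemma extendE_single {N : ℕ} (i : Fin N) :
    extendE N (Pi.single i 1) = Pi.single ((i : ℤ) + 1) 1 := by
  ext k
  by_cases hk : k ∈ Icc 1 (N : ℤ)
  · rw [extendE_apply_of_mem _ hk]
    rw [mem_Icc] at hk
    have : (⟨(k - 1).toNat, by omega⟩ : Fin N) = i ↔ k = (i : ℤ) + 1 := by
      rw [Fin.ext_iff, Fin.val_mk]; omega
    simp only [Pi.single_apply, this]
  · rw [extendE_eq_zero _ hk, Pi.single_apply, if_neg]
    rintro rfl
    exact hk (mem_Icc.mpr ⟨by omega, by omega⟩)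

lemma sum_sq_extendE {N : ℕ} (v : Fin N → ℝ) :
    ∑ k ∈ Icc (1 : ℤ) N, extendE N v k ^ 2 = ∑ i, v i ^ 2 := by
  refine sum_bij' (fun k hk => ⟨(k - 1).toNat, by rw [mem_Icc] at hk; omega⟩)
    (fun i _ => (i : ℤ) + 1) (fun _ _ => mem_univ _) (fun i _ => mem_Icc.mpr ⟨by omega, by omega⟩)
    (fun k hk => by rw [mem_Icc] at hk; simp; omega) (fun i _ => by simp)
    (fun k hk => by rw [extendE_apply_of_mem _ hk])

lemma normE_sq {N : ℕ} (v : Fin N → ℝ) : normE N v ^ 2 = ∑ i, v i ^ 2 := by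
  rw [normE, Real.sq_sqrt (sum_nonneg fun _ _ => sq_nonneg _), sum_sq_extendE]

lemma normE_eq_norm {N : ℕ} (v : Fin N → ℝ) : normE N v = ‖WithLp.toLp 2 v‖ := by
  rw [normE, sum_sq_extendE, EuclideanSpace.norm_eq]
  simp

lemma tendsto_normE_cocompact (N : ℕ) : Tendsto (normE N) (cocompact (Fin N → ℝ)) atTop := by
  rw [← (EuclideanSpace.equiv (Fin N) ℝ).toHomeomorph.map_cocompact, tendsto_map'_iff]
  exact tendsto_norm_cocompact_atTop.congr fun w => (normE_eq_norm _).symm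

lemma CoerciveE.exists_forall_le {N : ℕ} {J : (Fin N → ℝ) → ℝ} (hJ : CoerciveE N J)
    (hc : Continuous J) : ∃ v, ∀ w, J v ≤ J w := by
  refine hc.exists_forall_le (tendsto_atTop.mpr fun C => ?_)
  obtain ⟨R, hR⟩ := hJ C
  exact (tendsto_normE_cocompact N |>.eventually_ge_atTop R).mono hR

lemma exists_pos_mul_sum_sq_le_of_injective {ι κ : Type*} [Fintype ι] [Fintype κ]
    (L : (ι → ℝ) →ₗ[ℝ] κ → ℝ) (hL : Function.Injective L) : ∃ c > 0, ∀ v, c * ∑ i, v i ^ 2 ≤ ∑ j, L v j ^ 2 := by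
  set L' : EuclideanSpace ℝ ι →ₗ[ℝ] EuclideanSpace ℝ κ :=
    (EuclideanSpace.equiv κ ℝ).symm.toLinearMap ∘ₗ L ∘ₗ (EuclideanSpace.equiv ι ℝ).toLinearMap
  obtain ⟨K, hK, hKL⟩ := L'.injective_iff_antilipschitz.mp (by simpa [L'] using hL)
  refine ⟨1 / (K : ℝ) ^ 2, by positivity, fun v => ?_⟩
  have h := hKL.le_mul_dist (WithLp.toLp 2 v) 0
  simp only [dist_zero_right, map_zero] at h
  have h2 := pow_le_pow_left₀ (norm_nonneg _) h 2
  rw [mul_pow, EuclideanSpace.real_norm_sq_eq, EuclideanSpace.real_norm_sq_eq] at h2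
  rw [div_mul_eq_mul_div, one_mul, div_le_iff₀ (by positivity)]
  have hv : EuclideanSpace.equiv ι ℝ (WithLp.toLp 2 v) = v := rfl
  simpa [L', hv, mul_comm] using h2

lemma exists_pos_mul_normE_sq_le (n N : ℕ) : ∃ c > 0, ∀ v : Fin N → ℝ,
    c * normE N v ^ 2 ≤ ∑ k ∈ Icc (1 - (n : ℤ)) N, dd^[n] (extendE N v) k ^ 2 := by
  let L := LinearMap.funLeft ℝ ℝ (Subtype.val : Icc (1 - (n : ℤ)) N → ℤ) ∘ₗ ddIterₗ n ∘ₗ extendEₗ N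
  have hL : Function.Injective L := by
    refine (injective_iff_map_eq_zero L).mpr fun v hv => funext fun i => ?_
    have hdd : ∀ k ∈ Icc (1 - (n : ℤ)) N, dd^[n] (extendE N v) k = 0 :=
      fun k hk => congr_fun hv ⟨k, hk⟩
    rw [Pi.zero_apply, ← extendE_coe_add_one v i]
    refine eq_zero_of_dd_iter_eq_zero (a := 1) (b := N) (fun k hk => extendE_eq_zero v ?_)
      (fun k hk => hdd _ ?_) _ (by omega)
    · simp only [mem_Icc]; omega
    · simp only [mem_Icc] at hk ⊢; omega
  obtain ⟨c, hc, hcL⟩ := exists_pos_mul_sum_sq_le_of_injective L hL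
  refine ⟨c, hc, fun v => ?_⟩
  rw [normE_sq, ← sum_coe_sort (Icc (1 - (n : ℤ)) N)]
  exact hcL v

lemma hasDerivAt_Ffun {f : ℤ → ℝ → ℝ} {k : ℤ} (hf : Continuous (f k)) (s : ℝ) :
    HasDerivAt (Ffun f k) (f k s) s :=
  (hf.integral_hasStrictDerivAt 0 s).hasDerivAt

lemma continuous_Ffun {f : ℤ → ℝ → ℝ} {k : ℤ} (hf : Continuous (f k)) : Continuous (Ffun f k) :=
  continuous_iff_continuousAt.mpr fun s => (hasDerivAt_Ffun hf s).continuousAt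

lemma bddAbove_range_Ffun {f : ℤ → ℝ → ℝ} {k : ℤ} (hf : Continuous (f k)) {α : ℝ}
    (hsign : ∀ u, α < |u| → u * f k u ≤ 0) : BddAbove (Set.range (Ffun f k)) := by
  set G := Ffun f k
  set a := max α 0
  have hG : ∀ u, HasDerivAt G (f k u) u := hasDerivAt_Ffun hf
  have hGc : Continuous G := continuous_Ffun hf
  have hGd : Differentiable ℝ G := fun u => (hG u).differentiableAt
  have hanti : AntitoneOn G (Set.Ici a) := by
    refine antitoneOn_of_deriv_nonpos (convex_Ici a) hGc.continuousOn hGd.differentiableOn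
      fun u hu => ?_
    rw [interior_Ici, Set.mem_Ioi] at hu
    have := hsign u (by rw [abs_of_pos (by grind)]; grind)
    rw [(hG u).deriv]
    nlinarith [le_max_right α 0]
  have hmono : MonotoneOn G (Set.Iic (-a)) := by
    refine monotoneOn_of_deriv_nonneg (convex_Iic (-a)) hGc.continuousOn hGd.differentiableOn
      fun u hu => ?_
    rw [interior_Iic, Set.mem_Iio] at hu
    have := hsign u (by rw [abs_of_neg (by grind)]; grind)
    rw [(hG u).deriv]
    nlinarith [le_max_right α 0]
  have ha : 0 ≤ a := le_max_right α 0
  obtain ⟨M, hM⟩ := (isCompact_Icc (a := -a) (b := a)).bddAbove_image hGc.continuousOn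
  refine ⟨M, Set.forall_mem_range.mpr fun u => ?_⟩
  by_cases hua : a ≤ u
  · exact (hanti (Set.mem_Ici.mpr le_rfl) hua hua).trans (hM ⟨a, ⟨by linarith, le_rfl⟩, rfl⟩)
  by_cases hu : u ≤ -a
  · exact (hmono hu (Set.mem_Iic.mpr le_rfl) hu).trans (hM ⟨-a, ⟨le_rfl, by linarith⟩, rfl⟩)
  exact hM ⟨u, ⟨by linarith, by linarith⟩, rfl⟩

lemma exists_sum_Ffun_extendE_le {n N : ℕ} {f : ℤ → ℝ → ℝ} (hf : ∀ k, Continuous (f k)) {α : ℝ}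
    (hsign : ∀ k ∈ Icc (1 : ℤ) N, ∀ u : ℝ, α < |u| → u * f k u ≤ 0) :
    ∃ B, ∀ v : Fin N → ℝ, ∑ k ∈ Icc (1 - (n : ℤ)) N, Ffun f k (extendE N v k) ≤ B := by
  have hbound : ∀ k ∈ Icc (1 - (n : ℤ)) N, ∃ M, ∀ v : Fin N → ℝ, Ffun f k (extendE N v k) ≤ M := by
    intro k _
    by_cases hk : k ∈ Icc (1 : ℤ) N
    · obtain ⟨M, hM⟩ := bddAbove_range_Ffun (hf k) (hsign k hk)
      exact ⟨M, fun v => hM ⟨_, rfl⟩⟩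
    · exact ⟨0, fun v => by simp [extendE_eq_zero v hk, Ffun]⟩
  choose! M hM using hbound
  exact ⟨∑ k ∈ Icc (1 - (n : ℤ)) N, M k, fun v => sum_le_sum fun k hk => hM k hk v⟩

lemma exists_pos_forall_le {ι : Type*} (s : Finset ι) {p : ι → ℝ} (hp : ∀ k ∈ s, 0 < p k) :
    ∃ m > 0, ∀ k ∈ s, m ≤ p k := by
  rcases s.eq_empty_or_nonempty with rfl | hs
  · exact ⟨1, one_pos, by simp⟩
  · obtain ⟨k₀, hk₀, hmin⟩ := exists_min_image s p hs
    exact ⟨p k₀, hp k₀ hk₀, hmin⟩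

lemma coerciveE_of_le {N : ℕ} {J : (Fin N → ℝ) → ℝ} {c B : ℝ} (hc : 0 < c)
    (hJ : ∀ v, c * normE N v ^ 2 - B ≤ J v) : CoerciveE N J := by
  intro C
  refine ⟨max 1 ((C + B) / c), fun v hv => ?_⟩
  have h1 : 1 ≤ normE N v := (le_max_left _ _).trans hv
  have h2 := (div_le_iff₀ hc).mp ((le_max_right _ _).trans hv)
  nlinarith [hJ v, mul_le_mul_of_nonneg_left h1 (by positivity : 0 ≤ c * normE N v)]

lemma coerciveE_Jfun {n N : ℕ} {p : ℤ → ℝ} {F : ℤ → ℝ → ℝ}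
    (hp : ∀ k ∈ Icc (1 - (n : ℤ)) N, 0 < p k) {B : ℝ}
    (hF : ∀ v : Fin N → ℝ, ∑ k ∈ Icc (1 - (n : ℤ)) N, F k (extendE N v k) ≤ B) :
    CoerciveE N (Jfun n N p F) := by
  obtain ⟨c, hc, hpoinc⟩ := exists_pos_mul_normE_sq_le n N
  obtain ⟨m, hm, hmin⟩ := exists_pos_forall_le _ hp
  refine coerciveE_of_le (c := m / 2 * c) (B := B) (by positivity) fun v => ?_
  rw [Jfun, sum_sub_distrib]
  gcongr ?_ - ?_
  · calc m / 2 * c * normE N v ^ 2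
        ≤ m / 2 * ∑ k ∈ Icc (1 - (n : ℤ)) N, dd^[n] (extendE N v) k ^ 2 := by
          rw [mul_assoc]; gcongr; exact hpoinc v
      _ = ∑ k ∈ Icc (1 - (n : ℤ)) N, 1 / 2 * m * dd^[n] (extendE N v) k ^ 2 := by
          rw [mul_sum]; ring_nf
      _ ≤ _ := by gcongr with k hk; exact hmin k hk
  · exact hF v

lemma continuous_Jfun (n : ℕ) {N : ℕ} (p : ℤ → ℝ) {F : ℤ → ℝ → ℝ} (hF : ∀ k, Continuous (F k)) :
    Continuous (Jfun n N p F) := by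
  have hx : Continuous (extendE N) := (extendEₗ N).continuous_of_finiteDimensional
  have hd : Continuous fun v => dd^[n] (extendE N v) :=
    (ddIterₗ n ∘ₗ extendEₗ N).continuous_of_finiteDimensional
  exact continuous_finsetSum _ fun k _ =>
    (continuous_const.mul (((continuous_apply k).comp hd).pow 2)).sub
      ((hF k).comp ((continuous_apply k).comp hx))

lemma hasDerivAt_Jfun_add_smul (n : ℕ) {N : ℕ} (p : ℤ → ℝ) {F f : ℤ → ℝ → ℝ}
    (hF : ∀ k s, HasDerivAt (F k) (f k s) s) (v w : Fin N → ℝ) :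
    HasDerivAt (fun t : ℝ => Jfun n N p F (v + t • w))
      (∑ k ∈ Icc (1 - (n : ℤ)) N, (p k * dd^[n] (extendE N v) k * dd^[n] (extendE N w) k
        - f k (extendE N v k) * extendE N w k)) 0 := by
  have hx : ∀ t : ℝ, extendE N (v + t • w) = extendE N v + t • extendE N w := fun t =>
    (map_add (extendEₗ N) v (t • w)).trans (by rw [map_smul]; rfl)
  have hd : ∀ t : ℝ, dd^[n] (extendE N v + t • extendE N w)
      = dd^[n] (extendE N v) + t • dd^[n] (extendE N w) := fun t =>
    (map_add (ddIterₗ n) _ _).trans (by rw [map_smul]; rfl)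
  have hline : ∀ a b : ℝ, HasDerivAt (fun t : ℝ => a + t * b) b 0 := fun a b => by
    simpa using ((hasDerivAt_id (0 : ℝ)).mul_const b).const_add a
  simp only [Jfun, hx, hd, Pi.add_apply, Pi.smul_apply, smul_eq_mul]
  refine HasDerivAt.fun_sum fun k _ => HasDerivAt.sub ?_ ?_
  · refine (((hline _ _).fun_pow 2).const_mul (1 / 2 * p k)).congr_deriv ?_
    push_cast
    ring
  · exact ((hF k _).comp (0 : ℝ) (hline _ _)).congr_deriv (by simp)

lemma solves_of_forall_le {n N : ℕ} {p : ℤ → ℝ} {F f : ℤ → ℝ → ℝ}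
    (hF : ∀ k s, HasDerivAt (F k) (f k s) s) {v : Fin N → ℝ}
    (hv : ∀ w, Jfun n N p F v ≤ Jfun n N p F w) : Solves n N p f v := by
  intro k hk
  rw [mem_Icc] at hk
  obtain ⟨i, rfl⟩ : ∃ i : Fin N, (i : ℤ) + 1 = k := ⟨⟨(k - 1).toNat, by omega⟩, by simp; omega⟩
  have hmin : IsLocalMin (fun t : ℝ => Jfun n N p F (v + t • Pi.single i 1)) 0 :=
    Eventually.of_forall fun t => by simpa using hv _
  have h0 := hmin.hasDerivAt_eq_zero (hasDerivAt_Jfun_add_smul n p hF v _)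
  set g : ℤ → ℝ := fun j => p j * dd^[n] (extendE N v) j
  rw [sum_sub_distrib, extendE_single, sum_mul_dd_iter_single n g (by omega) (by omega)] at h0
  simp only [Pi.single_apply, mul_ite, mul_one, mul_zero, sum_ite_eq',
    if_pos (mem_Icc.mpr ⟨by omega, by omega⟩ : (i : ℤ) + 1 ∈ Icc (1 - (n : ℤ)) N)] at h0
  have hsq : ((-1 : ℝ) ^ n) ^ 2 = 1 := by rw [← pow_mul, mul_comm, pow_mul]; norm_num
  linear_combination (-1 : ℝ) ^ n * h0 - dd^[n] g ((i : ℤ) + 1 - n) * hsq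

theorem stmt5_general (n N : ℕ) (p : ℤ → ℝ)
    (f : ℤ → ℝ → ℝ) (hf : ∀ k, Continuous (f k))
    (hp : ∀ k ∈ Finset.Icc (1 - (n : ℤ)) (N : ℤ), 0 < p k)
    (α : ℝ)
    (hsign : ∀ k ∈ Finset.Icc (1 : ℤ) (N : ℤ), ∀ u : ℝ, α < |u| → u * f k u ≤ 0) :
    CoerciveE N (Jfun n N p (Ffun f)) ∧ ∃ v : Fin N → ℝ, Solves n N p f v := by
  obtain ⟨B, hB⟩ := exists_sum_Ffun_extendE_le (n := n) hf hsign
  have hcoer : CoerciveE N (Jfun n N p (Ffun f)) := coerciveE_Jfun hp hB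
  obtain ⟨v, hv⟩ := hcoer.exists_forall_le (continuous_Jfun n p fun k => continuous_Ffun (hf k))
  exact ⟨hcoer, v, solves_of_forall_le (fun k => hasDerivAt_Ffun (hf k)) hv⟩

theorem stmt5 (n N : ℕ) (hn : 1 ≤ n) (hN : 2 ≤ N) (p : ℤ → ℝ)
    (f : ℤ → ℝ → ℝ) (hf : ∀ k, Continuous (f k))
    (hp : ∀ k ∈ Finset.Icc (1 - (n : ℤ)) (N : ℤ), 0 < p k)
    (α : ℝ) (hα : 0 < α)
    (hsign : ∀ k ∈ Finset.Icc (1 : ℤ) (N : ℤ), ∀ u : ℝ, α < |u| → u * f k u ≤ 0) :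
    CoerciveE N (Jfun n N p (Ffun f)) ∧ ∃ v : Fin N → ℝ, Solves n N p f v :=
  stmt5_general n N p f hf hp α hsign
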